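/- arXiv:2106.04955 — 6 statements merged into one kernel-verified Lean document; each statement's English description precedes it below -/
import Mathlib

section
/- For every integer n ≥ 2, the function t ↦ t^(n−1)·Γ(t)/(t^(n−1) − 1) is strictly increasing on (1, ∞), where Γ(r) = ln(r) if n = 2 and Γ(r) = (1/(n−2))·(1 − r^(2−n)) if n ≥ 3. -/
/-!
For `n = 2` the function is `t log t / (t - 1)`, whose derivative `(t - 1 - log t) / (t - 1)²` is
positive because `log t < t - 1`. For `n ≥ 3` the rpow factors cancel, and with `m = n - 1`
and `t^m - 1 = (t - 1)(1 + t + ⋯ + t^(m-1))` the function becomes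
`(1 - (1 + t + ⋯ + t^(m-1))⁻¹) / (n - 2)`, increasing since the geometric sum is.
-/

noncomputable def Gam (n : ℕ) (r : ℝ) : ℝ :=
  if n = 2 then Real.log r else (1 / ((n : ℝ) - 2)) * (1 - r ^ ((2 : ℝ) - (n : ℝ)))

open Real Set Finset

lemma hasDerivAt_mul_log_div_sub_one {x : ℝ} (hx : 1 < x) :
    HasDerivAt (fun t => t * log t / (t - 1)) ((x - 1 - log x) / (x - 1) ^ 2) x :=
  ((hasDerivAt_mul_log (zero_lt_one.trans hx).ne').fun_div
    ((hasDerivAt_id' x).sub_const 1) (sub_ne_zero.2 hx.ne')).congr_deriv (by ring)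

theorem strictMonoOn_mul_log_div_sub_one :
    StrictMonoOn (fun t : ℝ => t * log t / (t - 1)) (Ioi 1) := by
  refine strictMonoOn_of_hasDerivWithinAt_pos (convex_Ioi 1)
    (f' := fun x => (x - 1 - log x) / (x - 1) ^ 2)
    (fun x hx => (hasDerivAt_mul_log_div_sub_one hx).continuousAt.continuousWithinAt)
    (fun x hx => (hasDerivAt_mul_log_div_sub_one (by simpa using hx)).hasDerivWithinAt)
    (fun x hx => ?_)
  rw [interior_Ioi] at hx
  have hlog : log x < x - 1 := log_lt_sub_one_of_pos (zero_lt_one.trans hx) hx.ne'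
  have : 0 < x - 1 := sub_pos.2 hx
  positivity

theorem strictMonoOn_one_sub_inv_geom_sum {m : ℕ} (hm : 2 ≤ m) :
    StrictMonoOn (fun t : ℝ => 1 - (∑ i ∈ range m, t ^ i)⁻¹) (Ici 0) := by
  intro x (hx : 0 ≤ x) y _ hxy
  have hpos : 0 < ∑ i ∈ range m, x ^ i := geom_sum_pos hx (by omega)
  have hsum : ∑ i ∈ range m, x ^ i < ∑ i ∈ range m, y ^ i :=
    sum_lt_sum (fun i _ => pow_le_pow_left₀ hx hxy.le i) ⟨1, mem_range.2 hm, by simpa using hxy⟩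
  exact sub_lt_sub_left (inv_strictAnti₀ hpos hsum) 1

theorem pow_sub_div_pow_sub_one_eq_one_sub_inv_geom_sum {t : ℝ} (ht : 1 < t) {m : ℕ}
    (hm : m ≠ 0) : (t ^ m - t) / (t ^ m - 1) = 1 - (∑ i ∈ range m, t ^ i)⁻¹ := by
  have : t ^ m - 1 ≠ 0 := sub_ne_zero.2 (one_lt_pow₀ ht hm).ne'
  rw [geom_sum_eq ht.ne', inv_div]
  field_simp
  ring

theorem rpow_mul_Gam_div_eq {n : ℕ} (hn : 3 ≤ n) {t : ℝ} (ht : 1 < t) :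
    t ^ ((n : ℝ) - 1) * Gam n t / (t ^ ((n : ℝ) - 1) - 1)
      = (1 - (∑ i ∈ range (n - 1), t ^ i)⁻¹) / (n - 2) := by
  have ht0 : 0 < t := zero_lt_one.trans ht
  have hpow : t ^ ((n : ℝ) - 1) = t ^ (n - 1) := by
    rw [← rpow_natCast, Nat.cast_sub (by omega : 1 ≤ n), Nat.cast_one]
  have hrpow : t ^ ((2 : ℝ) - n) = t / t ^ (n - 1) := by
    rw [show (2 : ℝ) - n = 1 - (n - 1) by ring, rpow_sub ht0, rpow_one, hpow]
  have : t ^ (n - 1) ≠ 0 := by positivity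
  rw [← pow_sub_div_pow_sub_one_eq_one_sub_inv_geom_sum ht (by omega), Gam, if_neg (by omega),
    hrpow, hpow]
  field_simp

theorem stmt_3 (n : ℕ) (hn : 2 ≤ n) :
    StrictMonoOn (fun t : ℝ => t ^ ((n : ℝ) - 1) * Gam n t / (t ^ ((n : ℝ) - 1) - 1))
      (Set.Ioi 1) := by
  obtain rfl | hn3 := hn.eq_or_lt
  · exact strictMonoOn_mul_log_div_sub_one.congr fun t _ => by norm_num [Gam]
  have hc : (0 : ℝ) < n - 2 := by
    have : (3 : ℝ) ≤ n := by exact_mod_cast hn3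
    linarith
  intro x (hx : 1 < x) y (hy : 1 < y) hxy
  simp only [rpow_mul_Gam_div_eq hn3 hx, rpow_mul_Gam_div_eq hn3 hy]
  exact div_lt_div_of_pos_right (strictMonoOn_one_sub_inv_geom_sum (by omega)
    (zero_le_one.trans hx.le) (zero_le_one.trans hy.le) hxy) hc
end

section
/- For every integer n ≥ 2 and every t > 1, one has (n − 1/2)·( t^(2n−2)·Γ(t)/(t^n − 1) − 1/n ) ≥ t^(n−1)·(t^(n−1) − 1)/(t^n − 1) − ((n−1)/n)·t^(−1), where Γ(r) = ln(r) if n = 2 and Γ(r) = (1/(n−2))·(1 − r^(2−n)) if n ≥ 3. -/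
/-!
Multiplying the difference of the two sides by `2n (t^n - 1) t^(2-2n) > 0` turns it into
`F(t) = n(2n-1) Γ(t) + (2n-1)(t^(2-2n) - t^(2-n) + 2 t^(1-n)) - 2(n-1) t^(1-2n) - 2n`.
Since `Γ' (r) = r^(1-n)`, the function `Γ` drops out of `F'`, which factors as
`2(2n-1)(n-1)(t^(1-n) - t^(-n))(1 - t^(-n)) ≥ 0`; together with `F(1) = 0` this gives `F ≥ 0` on `[1, ∞)`.
Only `Γ(1) = 0` and `Γ' (r) = r^(1-n)` enter, so the argument works for any real exponent `p ≥ 1` in place of `n`.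
-/

open Real Set

lemma hasDerivAt_rpow_const_of_eq {x : ℝ} (hx : 0 < x) {q r : ℝ} (h : r = q - 1) :
    HasDerivAt (fun y : ℝ => y ^ q) (q * x ^ r) x :=
  h ▸ hasDerivAt_rpow_const (Or.inl hx.ne')

noncomputable def gammaGap (p : ℝ) (G : ℝ → ℝ) (x : ℝ) : ℝ :=
  p * (2 * p - 1) * G x + (2 * p - 1) * (x ^ (2 - 2 * p) - x ^ (2 - p) + 2 * x ^ (1 - p))
    - 2 * (p - 1) * x ^ (1 - 2 * p) - 2 * p

section
variable {p : ℝ} {G : ℝ → ℝ}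

lemma gammaGap_one (hG : G 1 = 0) : gammaGap p G 1 = 0 := by
  simp only [gammaGap, hG, one_rpow]
  ring

lemma hasDerivAt_gammaGap {x : ℝ} (hx : 0 < x) (hG : HasDerivAt G (x ^ (1 - p)) x) :
    HasDerivAt (gammaGap p G)
      (2 * (2 * p - 1) * (p - 1) * ((x ^ (1 - p) - x ^ (-p)) * (1 - x ^ (-p)))) x := by
  have h₁ := hasDerivAt_rpow_const_of_eq hx (q := 2 - 2 * p) (r := 1 - 2 * p) (by ring)
  have h₂ := hasDerivAt_rpow_const_of_eq hx (q := 2 - p) (r := 1 - p) (by ring)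
  have h₃ := hasDerivAt_rpow_const_of_eq hx (q := 1 - p) (r := -p) (by ring)
  have h₄ := hasDerivAt_rpow_const_of_eq hx (q := 1 - 2 * p) (r := -2 * p) (by ring)
  have hsum := (((hG.const_mul (p * (2 * p - 1))).add
    (((h₁.sub h₂).add (h₃.const_mul 2)).const_mul (2 * p - 1))).sub
    (h₄.const_mul (2 * (p - 1)))).sub_const (2 * p)
  have e₁ : x ^ (1 - 2 * p) = x ^ (1 - p) * x ^ (-p) := by rw [← rpow_add hx]; ring_nf
  have e₂ : x ^ (-2 * p) = x ^ (-p) * x ^ (-p) := by rw [← rpow_add hx]; ring_nf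
  refine HasDerivAt.congr_deriv (f := gammaGap p G) hsum ?_
  rw [e₁, e₂]
  ring

lemma gammaGap_nonneg (hp : 1 ≤ p) (hG : ∀ x, 1 ≤ x → HasDerivAt G (x ^ (1 - p)) x)
    (hG₁ : G 1 = 0) {x : ℝ} (hx : 1 ≤ x) : 0 ≤ gammaGap p G x := by
  have hderiv (y : ℝ) (hy : 1 ≤ y) := hasDerivAt_gammaGap (one_pos.trans_le hy) (hG y hy)
  have hmono : MonotoneOn (gammaGap p G) (Ici 1) := by
    refine monotoneOn_of_hasDerivWithinAt_nonneg (convex_Ici 1)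
      (fun y hy => (hderiv y hy).continuousAt.continuousWithinAt)
      (fun y hy => (hderiv y (interior_subset hy)).hasDerivWithinAt) fun y hy => ?_
    have hy : 1 ≤ y := interior_subset hy
    have hpow : y ^ (-p) ≤ 1 := rpow_le_one_of_one_le_of_nonpos hy (by linarith)
    have hpow' : y ^ (-p) ≤ y ^ (1 - p) := rpow_le_rpow_of_exponent_le hy (by linarith)
    have : 0 ≤ 2 * (2 * p - 1) * (p - 1) := by nlinarith
    exact mul_nonneg this (mul_nonneg (by linarith) (by linarith))
  simpa [gammaGap_one hG₁] using hmono self_mem_Ici hx hx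

end

lemma Gam_one (n : ℕ) : Gam n 1 = 0 := by
  simp [Gam]

lemma hasDerivAt_Gam {n : ℕ} (hn : 2 ≤ n) {x : ℝ} (hx : 0 < x) :
    HasDerivAt (Gam n) (x ^ (1 - (n : ℝ))) x := by
  rcases hn.eq_or_lt with rfl | hn
  · have hGam : Gam 2 = log := funext fun r => if_pos rfl
    rw [hGam, show (1 : ℝ) - (2 : ℕ) = -1 by norm_num, rpow_neg_one]
    exact hasDerivAt_log hx.ne'
  · have hGam : Gam n = fun r => 1 / ((n : ℝ) - 2) * (1 - r ^ (2 - (n : ℝ))) :=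
      funext fun r => if_neg hn.ne'
    have hn' : (n : ℝ) - 2 ≠ 0 := sub_ne_zero.2 (by exact_mod_cast hn.ne')
    rw [hGam]
    refine (((hasDerivAt_rpow_const_of_eq hx (q := 2 - (n : ℝ)) (r := 1 - n) (by ring)).const_sub
      1).const_mul _).congr_deriv ?_
    field_simp
    ring

lemma sub_eq_gammaGap_div (G : ℝ → ℝ) {p t : ℝ} (hp : p ≠ 0) (ht : 0 < t) (htp : t ^ p ≠ 1) :
    (p - 1 / 2) * (t ^ (2 * p - 2) * G t / (t ^ p - 1) - 1 / p) -
      (t ^ (p - 1) * ((t ^ (p - 1) - 1) / (t ^ p - 1)) - ((p - 1) / p) * t⁻¹) =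
      t ^ (2 * p - 2) * gammaGap p G t / (2 * p * (t ^ p - 1)) := by
  set a := t ^ (p - 1) with ha
  have ha0 : 0 < a := rpow_pos_of_pos ht _
  have e₁ : t ^ (2 * p - 2) = a * a := by rw [ha, ← rpow_add ht]; ring_nf
  have e₂ : t ^ p = a * t := by rw [ha, ← rpow_add_one ht.ne']; ring_nf
  have e₃ : t ^ (1 - p) = a⁻¹ := by rw [ha, ← rpow_neg ht.le]; ring_nf
  have e₄ : t ^ (2 - 2 * p) = a⁻¹ * a⁻¹ := by rw [← e₃, ← rpow_add ht]; ring_nf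
  have e₅ : t ^ (2 - p) = a⁻¹ * t := by rw [← e₃, ← rpow_add_one ht.ne']; ring_nf
  have e₆ : t ^ (1 - 2 * p) = a⁻¹ * a⁻¹ * t⁻¹ := by
    rw [← e₃, ← rpow_add ht, ← rpow_neg_one, ← rpow_add ht]; ring_nf
  have hD : a * t - 1 ≠ 0 := sub_ne_zero.2 (e₂ ▸ htp)
  simp only [gammaGap, e₁, e₂, e₄, e₅, e₃, e₆]
  field_simp
  ring

theorem stmt_5 (n : ℕ) (hn : 2 ≤ n) (t : ℝ) (ht : 1 < t) :
    ((n : ℝ) - 1 / 2) * (t ^ (2 * (n : ℝ) - 2) * Gam n t / (t ^ (n : ℝ) - 1) - 1 / (n : ℝ)) ≥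
      t ^ ((n : ℝ) - 1) * ((t ^ ((n : ℝ) - 1) - 1) / (t ^ (n : ℝ) - 1)) -
        (((n : ℝ) - 1) / (n : ℝ)) * t⁻¹ := by
  have hn' : (2 : ℝ) ≤ n := by exact_mod_cast hn
  have ht₀ : 0 < t := one_pos.trans ht
  have htn : 1 < t ^ (n : ℝ) := one_lt_rpow ht (by linarith)
  have hgap : 0 ≤ gammaGap n (Gam n) t :=
    gammaGap_nonneg (by linarith) (fun x hx => hasDerivAt_Gam hn (one_pos.trans_le hx))
      (Gam_one n) ht.le
  rw [ge_iff_le, ← sub_nonneg, sub_eq_gammaGap_div _ (by linarith) ht₀ htn.ne']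
  have hden : 0 < 2 * (n : ℝ) * (t ^ (n : ℝ) - 1) := by nlinarith
  exact div_nonneg (mul_nonneg (rpow_nonneg ht₀.le _) hgap) hden.le
end

section
/- For every integer n ≥ 2, the function t ↦ t^(−1)·(t^n − 1)/(t^(n−1) − 1) is strictly decreasing on (1, ∞), and its limit as t → 1⁺ equals n/(n−1). -/
open Finset Set Filter Topology

/-
Cancelling the factor `t - 1` from `t ^ (m + 1) - 1` and `t ^ m - 1` leaves geometric sums, and
with `G t = 1 + t + ⋯ + t ^ (m - 1)` the function becomes `1 + (t * G t)⁻¹`. As `t * G t` is a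
polynomial with nonnegative coefficients, it is strictly increasing for `t > 0`, which gives the
monotonicity; and the new expression is continuous at `t = 1`, with value `1 + 1 / m`.
-/

lemma inv_mul_div_pow_succ_sub_one {K : Type*} [Field K] {m : ℕ} {t : K} (ht : t ≠ 0)
    (htm : t ^ m ≠ 1) :
    t⁻¹ * ((t ^ (m + 1) - 1) / (t ^ m - 1)) = 1 + (t * ∑ k ∈ range m, t ^ k)⁻¹ := by
  have ht1 : t - 1 ≠ 0 := sub_ne_zero.2 fun h => htm (by rw [h, one_pow])
  have hG : ∑ k ∈ range m, t ^ k ≠ 0 := fun h =>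
    htm <| sub_eq_zero.1 (by rw [← geom_sum_mul, h, zero_mul])
  rw [← geom_sum_mul, ← geom_sum_mul, geom_sum_succ, mul_div_mul_right _ _ ht1]
  field_simp

section Ordered

variable {R : Type*} {m : ℕ}

lemma strictMonoOn_mul_geom_sum [Semiring R] [PartialOrder R] [IsStrictOrderedRing R]
    (hm : m ≠ 0) : StrictMonoOn (fun t : R => t * ∑ k ∈ range m, t ^ k) (Ici 0) := by
  intro a ha b hb hab
  have hG : ∑ k ∈ range m, a ^ k ≤ ∑ k ∈ range m, b ^ k :=
    sum_le_sum fun k _ => pow_le_pow_left₀ ha hab.le k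
  exact mul_lt_mul hab hG (geom_sum_pos ha hm) hb

lemma strictAntiOn_one_add_inv_mul_geom_sum [Field R] [LinearOrder R] [IsStrictOrderedRing R]
    (hm : m ≠ 0) : StrictAntiOn (fun t : R => 1 + (t * ∑ k ∈ range m, t ^ k)⁻¹) (Ioi 0) := by
  intro a ha b hb hab
  have hlt := strictMonoOn_mul_geom_sum hm (le_of_lt ha) (le_of_lt hb) hab
  simpa using inv_strictAnti₀ (mul_pos ha (geom_sum_pos (le_of_lt ha) hm)) hlt

end Ordered

theorem stmt_6 (n : ℕ) (hn : 2 ≤ n) :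
    StrictAntiOn (fun t : ℝ => t⁻¹ * ((t ^ n - 1) / (t ^ (n - 1) - 1))) (Set.Ioi 1) ∧
      Filter.Tendsto (fun t : ℝ => t⁻¹ * ((t ^ n - 1) / (t ^ (n - 1) - 1)))
        (nhdsWithin 1 (Set.Ioi 1)) (nhds ((n : ℝ) / ((n : ℝ) - 1))) := by
  obtain ⟨m, rfl⟩ : ∃ m, n = m + 1 := ⟨n - 1, by omega⟩
  have hm : m ≠ 0 := by omega
  rw [Nat.add_sub_cancel]
  have hEq : EqOn (fun t : ℝ => 1 + (t * ∑ k ∈ range m, t ^ k)⁻¹)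
      (fun t => t⁻¹ * ((t ^ (m + 1) - 1) / (t ^ m - 1))) (Ioi 1) := fun t ht =>
    (inv_mul_div_pow_succ_sub_one (zero_lt_one.trans ht).ne' (one_lt_pow₀ ht hm).ne').symm
  refine ⟨((strictAntiOn_one_add_inv_mul_geom_sum hm).mono (Ioi_subset_Ioi zero_le_one)).congr hEq,
    (tendsto_congr' hEq.eventuallyEq_nhdsWithin).1 ?_⟩
  have hval : 1 + (1 * ∑ k ∈ range m, (1 : ℝ) ^ k)⁻¹ = ((m + 1 : ℕ) : ℝ) / ((m + 1 : ℕ) - 1) := by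
    have : (m : ℝ) ≠ 0 := by exact_mod_cast hm
    push_cast
    simp only [one_pow, sum_const, card_range, nsmul_eq_mul, mul_one, one_mul, add_sub_cancel_right]
    field_simp
  rw [← hval]
  refine ContinuousAt.tendsto ?_ |>.mono_left nhdsWithin_le_nhds
  fun_prop (disch := simpa using hm)
end

section
/- For every integer n ≥ 2 and every t > 1, one has (t^(n−1)·Γ(t)/(t^n − 1))·(2 − t^(n−1)) ≤ 1/n, where Γ(r) = ln(r) if n = 2 and Γ(r) = (1/(n−2))·(1 − r^(2−n)) if n ≥ 3. -/
theorem stmt_8 (n : ℕ) (hn : 2 ≤ n) (t : ℝ) (ht : 1 < t) :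
    (t ^ ((n : ℝ) - 1) * Gam n t / (t ^ (n : ℝ) - 1)) * (2 - t ^ ((n : ℝ) - 1)) ≤
      1 / (n : ℝ) := by
  have ht0 : (0 : ℝ) < t := lt_trans one_pos ht
  -- convert rpows to nat pows
  have hcast1 : ((n : ℝ) - 1) = ((n - 1 : ℕ) : ℝ) := by
    have : (1 : ℕ) ≤ n := by omega
    push_cast [Nat.cast_sub this]; ring
  have hr1 : t ^ ((n : ℝ) - 1) = t ^ (n - 1 : ℕ) := by
    rw [hcast1, Real.rpow_natCast]
  have hrn : t ^ ((n : ℝ)) = t ^ (n : ℕ) := Real.rpow_natCast t n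
  have hpown : (1 : ℝ) < t ^ (n : ℕ) := one_lt_pow₀ ht (by omega)
  have hs1 : (1 : ℝ) ≤ t ^ (n - 1 : ℕ) := one_le_pow₀ ht.le
  -- Bernoulli : n (t-1) ≤ t^n - 1
  have hbern : (n : ℝ) * (t - 1) ≤ t ^ (n : ℕ) - 1 := by
    have := one_add_mul_le_pow (a := t - 1) (by nlinarith) n
    simp only [add_sub_cancel] at this
    linarith
  -- Key: n * Gam n t ≤ t^n - 1
  have hGam0 : 0 ≤ Gam n t := by
    unfold Gam
    split_ifs with h
    · exact Real.log_nonneg ht.le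
    · have hn3 : 3 ≤ n := by omega
      have hneg : (2 : ℝ) - (n : ℝ) < 0 := by
        have : (3 : ℝ) ≤ (n : ℝ) := by exact_mod_cast hn3
        linarith
      have hlt : t ^ ((2 : ℝ) - (n : ℝ)) < 1 :=
        Real.rpow_lt_one_of_one_lt_of_neg ht hneg
      have hk : (0 : ℝ) < (n : ℝ) - 2 := by
        have : (3 : ℝ) ≤ (n : ℝ) := by exact_mod_cast hn3
        linarith
      exact mul_nonneg (one_div_nonneg.mpr hk.le) (by linarith)
  have hkey : (n : ℝ) * Gam n t ≤ t ^ (n : ℕ) - 1 := by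
    unfold Gam
    split_ifs with h
    · subst h
      have hlog : Real.log t ≤ t - 1 := Real.log_le_sub_one_of_pos ht0
      have : (2 : ℝ) * (t - 1) ≤ t ^ (2 : ℕ) - 1 := by nlinarith
      push_cast
      nlinarith
    · have hn3 : 3 ≤ n := by omega
      set k : ℕ := n - 2 with hk
      have hk1 : 1 ≤ k := by omega
      have hkR : ((n : ℝ) - 2) = (k : ℝ) := by
        have : (2 : ℕ) ≤ n := hn
        push_cast [hk, Nat.cast_sub this]; ring
      have hkpos : (0 : ℝ) < (k : ℝ) := by exact_mod_cast hk1
      have hrpow : t ^ ((2 : ℝ) - (n : ℝ)) = (t ^ (k : ℕ))⁻¹ := by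
        have : (2 : ℝ) - (n : ℝ) = -((k : ℕ) : ℝ) := by rw [← hkR]; ring
        rw [this, Real.rpow_neg ht0.le, Real.rpow_natCast]
      set x : ℝ := t ^ (k : ℕ) with hx
      have hxpos : (0 : ℝ) < x := by positivity
      -- t^k - 1 ≤ k * (t-1) * t^k
      have hsum : (∑ i ∈ Finset.range k, t ^ i) ≤ (k : ℝ) * x := by
        calc (∑ i ∈ Finset.range k, t ^ i) ≤ ∑ i ∈ Finset.range k, x := by
              refine Finset.sum_le_sum fun i hi => ?_
              exact pow_le_pow_right₀ ht.le (le_of_lt (Finset.mem_range.mp hi))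
          _ = (k : ℝ) * x := by simp [mul_comm]
      have hgs : (∑ i ∈ Finset.range k, t ^ i) * (t - 1) = x - 1 := geom_sum_mul t k
      have hxk : x - 1 ≤ (k : ℝ) * (t - 1) * x := by
        have := mul_le_mul_of_nonneg_right hsum (by linarith : (0:ℝ) ≤ t - 1)
        rw [hgs] at this
        nlinarith
      have h1 : 1 - x⁻¹ ≤ (k : ℝ) * (t - 1) := by
        rw [← div_le_iff₀ hxpos] at hxk
        have : 1 - x⁻¹ = (x - 1) / x := by field_simp
        linarith [hxk, this.le, this.ge]
      have h2 : (1 / ((n : ℝ) - 2)) * (1 - t ^ ((2 : ℝ) - (n : ℝ))) ≤ t - 1 := by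
        rw [hrpow, hkR]
        rw [div_mul_eq_mul_div, div_le_iff₀ hkpos]
        nlinarith
      have hn0 : (0 : ℝ) ≤ (n : ℝ) := Nat.cast_nonneg n
      calc (n : ℝ) * ((1 / ((n : ℝ) - 2)) * (1 - t ^ ((2 : ℝ) - (n : ℝ))))
          ≤ (n : ℝ) * (t - 1) := by
            exact mul_le_mul_of_nonneg_left h2 hn0
        _ ≤ t ^ (n : ℕ) - 1 := hbern
  -- assemble
  rw [hr1, hrn]
  set s : ℝ := t ^ (n - 1 : ℕ) with hsdef
  have hd : (0 : ℝ) < t ^ (n : ℕ) - 1 := by linarith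
  have hnpos : (0 : ℝ) < (n : ℝ) := by positivity
  rw [div_mul_eq_mul_div, div_le_div_iff₀ hd hnpos]
  have hB : s * (2 - s) ≤ 1 := by nlinarith [sq_nonneg (s - 1)]
  have hnG : 0 ≤ (n : ℝ) * Gam n t := mul_nonneg hnpos.le hGam0
  nlinarith [mul_nonneg hnG (by linarith : (0:ℝ) ≤ 1 - s * (2 - s))]
end

section
/- Let n ≥ 2 be an integer and β ≥ n − 1/2. Define for 1 ≤ r < R the function ρ(r) = δ(R)/2 + (β δ(R) r/2)·((R/r)^(2n−2) Γ(R/r))/((R/r)^(n−1) − 1) − (δ(R) r/(2n))·(β − (n−1)/R)·((R/r)^n − 1)/((R/r)^(n−1) − 1), where Γ and δ are as usual. Then ρ is strictly decreasing on [1, R), lim_{r→R} ρ(r) = δ(R), and consequently ρ(r) ≥ δ(R) for all r ∈ [1, R). -/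
noncomputable def del (n : ℕ) (β r : ℝ) : ℝ :=
  1 / (1 + β * r ^ ((n : ℝ) - 1) * Gam n r)

noncomputable def rho (n : ℕ) (β R r : ℝ) : ℝ :=
  del n β R / 2 +
    (β * del n β R * r / 2) *
      ((R / r) ^ (2 * (n : ℝ) - 2) * Gam n (R / r) / ((R / r) ^ ((n : ℝ) - 1) - 1)) -
    (del n β R * r / (2 * n)) * (β - ((n : ℝ) - 1) / R) *
      (((R / r) ^ (n : ℝ) - 1) / ((R / r) ^ ((n : ℝ) - 1) - 1))

/-
Put s = R / r, which runs through (1, R] as r runs through [1, R). Then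
ρ(r) = δ/2 + (β δ R / 2) g(s) - (δ R / (2n)) (β - (n-1)/R) q(s) with
g(s) = s^(2n-3) Γ(s) / (s^(n-1) - 1) and q(s) = (s^n - 1) / (s (s^(n-1) - 1)),
and both coefficients are positive because β > n - 1 > (n-1)/R.
Writing A_k(s) = 1 + s + ... + s^(k-1), we have q = 1 + 1/(s A_(n-1)), which decreases, while
g increases: for n = 2 it is the slope of the concave function log between 1/s and 1, and for
n ≥ 3 it equals s^(n-2) (1 - 1/A_(n-1)) / (n-2). Hence ρ decreases in r. As s → 1 these
expressions tend to 1/(n-1) and n/(n-1), which makes the limit exactly δ(R); a strictly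
decreasing function lies above its limit at the right endpoint.
-/
open Finset Filter Real Set Topology

noncomputable def gamRatio (n : ℕ) (s : ℝ) : ℝ :=
  s ^ (2 * (n : ℝ) - 3) * Gam n s / (s ^ ((n : ℝ) - 1) - 1)

noncomputable def powRatio (n : ℕ) (s : ℝ) : ℝ :=
  (s ^ (n : ℝ) - 1) / (s * (s ^ ((n : ℝ) - 1) - 1))

noncomputable def rhoOfRatio (n : ℕ) (β R s : ℝ) : ℝ :=
  del n β R / 2 + β * del n β R * R / 2 * gamRatio n s -
    del n β R * R / (2 * n) * (β - ((n : ℝ) - 1) / R) * powRatio n s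

lemma rho_eq_rhoOfRatio (n : ℕ) (β : ℝ) {R r : ℝ} (hR : 0 < R) (hr : 0 < r) :
    rho n β R r = rhoOfRatio n β R (R / r) := by
  have hs : R / r ≠ 0 := (div_pos hR hr).ne'
  have hpow : (R / r) ^ (2 * (n : ℝ) - 2) = (R / r) ^ (2 * (n : ℝ) - 3) * (R / r) := by
    rw [← rpow_add_one hs]; congr 1; ring
  rw [rho, rhoOfRatio, gamRatio, powRatio, hpow]
  field_simp

lemma geom_sum_le_geom_sum {R : Type*} [CommSemiring R] [PartialOrder R] [IsOrderedRing R]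
    {x y : R} (hx : 0 ≤ x) (hxy : x ≤ y) (k : ℕ) :
    ∑ i ∈ range k, x ^ i ≤ ∑ i ∈ range k, y ^ i :=
  sum_le_sum fun i _ => pow_le_pow_left₀ hx hxy i

lemma rpow_natCast_sub_one {n : ℕ} (hn : 1 ≤ n) (s : ℝ) : s ^ ((n : ℝ) - 1) = s ^ (n - 1) := by
  rw [← Nat.cast_pred hn, rpow_natCast]

lemma powRatio_eq {n : ℕ} (hn : 2 ≤ n) {s : ℝ} (hs : 0 < s) (hs1 : s ≠ 1) :
    powRatio n s = 1 + 1 / (s * ∑ i ∈ range (n - 1), s ^ i) := by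
  have hA := geom_sum_pos hs.le (show n - 1 ≠ 0 by omega)
  have hsub : s - 1 ≠ 0 := sub_ne_zero.2 hs1
  have hpow : s ^ n - 1 = (s * ∑ i ∈ range (n - 1), s ^ i + 1) * (s - 1) := by
    rw [← geom_sum_mul, ← geom_sum_succ, Nat.sub_add_cancel (by omega)]
  rw [powRatio, rpow_natCast, rpow_natCast_sub_one (by omega), hpow, ← geom_sum_mul]
  field_simp

lemma gamRatio_add_three (m : ℕ) {s : ℝ} (hs : 0 < s) (hs1 : s ≠ 1) :
    gamRatio (m + 3) s = s ^ (m + 1) * (1 - 1 / ∑ i ∈ range (m + 2), s ^ i) / (m + 1) := by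
  have hA := geom_sum_pos hs.le (show m + 2 ≠ 0 by omega)
  have hsub : s - 1 ≠ 0 := sub_ne_zero.2 hs1
  have hgeom := geom_sum_mul s (m + 2)
  have e1 : s ^ (2 * ((m + 3 : ℕ) : ℝ) - 3) = s ^ (2 * m + 3) := by
    rw [← rpow_natCast]; push_cast; ring_nf
  have e2 : s ^ ((2 : ℝ) - ((m + 3 : ℕ) : ℝ)) = (s ^ (m + 1))⁻¹ := by
    rw [← rpow_natCast, ← rpow_neg hs.le]; push_cast; ring_nf
  have hcast : ((m + 3 : ℕ) : ℝ) - 2 = m + 1 := by push_cast; ring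
  rw [gamRatio, Gam, if_neg (by omega), e1, e2, rpow_natCast_sub_one (by omega),
    show m + 3 - 1 = m + 2 by omega, ← hgeom, hcast]
  field_simp
  linear_combination (-(s ^ (m + 1)) ^ 2) * hgeom

lemma gamRatio_two {s : ℝ} (hs : s ≠ 0) :
    gamRatio 2 s = (log s⁻¹ - log 1) / (s⁻¹ - 1) := by
  rw [gamRatio, Gam, if_pos rfl, log_inv, log_one]
  norm_num
  field_simp
  rw [← neg_sub s 1, div_neg, neg_neg]

lemma strictAntiOn_powRatio {n : ℕ} (hn : 2 ≤ n) : StrictAntiOn (powRatio n) (Ioi 1) := by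
  intro s (hs : 1 < s) t (ht : 1 < t) hst
  have hs0 : 0 < s := one_pos.trans hs
  rw [powRatio_eq hn hs0 hs.ne', powRatio_eq hn (one_pos.trans ht) ht.ne']
  have hA := geom_sum_pos hs0.le (show n - 1 ≠ 0 by omega)
  have hlt : s * ∑ i ∈ range (n - 1), s ^ i < t * ∑ i ∈ range (n - 1), t ^ i :=
    mul_lt_mul hst (geom_sum_le_geom_sum hs0.le hst.le _) hA (by linarith)
  gcongr

lemma strictMonoOn_gamRatio {n : ℕ} (hn : 2 ≤ n) : StrictMonoOn (gamRatio n) (Ioi 1) := by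
  intro s (hs : 1 < s) t (ht : 1 < t) hst
  have hs0 : 0 < s := one_pos.trans hs
  have ht0 : 0 < t := one_pos.trans ht
  obtain rfl | ⟨m, rfl⟩ : n = 2 ∨ ∃ m, n = m + 3 :=
    (eq_or_ne n 2).imp_right fun h => ⟨n - 3, by omega⟩
  · rw [gamRatio_two hs0.ne', gamRatio_two ht0.ne']
    exact strictConcaveOn_log_Ioi.secant_strict_mono (mem_Ioi.2 one_pos) (inv_pos.2 ht0)
      (inv_pos.2 hs0) (inv_ne_one.2 ht.ne') (inv_ne_one.2 hs.ne') (inv_strictAnti₀ hs0 hst)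
  · rw [gamRatio_add_three m hs0 hs.ne', gamRatio_add_three m ht0 ht.ne']
    have hA := geom_sum_pos hs0.le (show m + 2 ≠ 0 by omega)
    have hA1 : 1 < ∑ i ∈ range (m + 2), s ^ i := by
      rw [geom_sum_succ]; exact lt_add_of_pos_left 1 (mul_pos hs0 (geom_sum_pos hs0.le (by omega)))
    have hfactor : 1 - 1 / ∑ i ∈ range (m + 2), s ^ i ≤ 1 - 1 / ∑ i ∈ range (m + 2), t ^ i := by
      gcongr
    have hpos : 0 < 1 - 1 / ∑ i ∈ range (m + 2), s ^ i := sub_pos.2 ((div_lt_one hA).2 hA1)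
    gcongr ?_ / _
    exact mul_lt_mul (pow_lt_pow_left₀ hst hs0.le (by omega)) hfactor hpos (by positivity)

lemma tendsto_inv_nhdsGT_one_nhdsNE : Tendsto (·⁻¹) (𝓝[>] (1 : ℝ)) (𝓝[≠] 1) := by
  refine tendsto_nhdsWithin_iff.2
    ⟨?_, eventually_nhdsWithin_of_forall fun s (hs : 1 < s) => inv_ne_one.2 hs.ne'⟩
  simpa using (continuousAt_inv₀ (one_ne_zero' ℝ)).tendsto.mono_left nhdsWithin_le_nhds

lemma tendsto_powRatio {n : ℕ} (hn : 2 ≤ n) :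
    Tendsto (powRatio n) (𝓝[>] 1) (𝓝 (n / ((n : ℝ) - 1))) := by
  have hc : ContinuousAt (fun s : ℝ => 1 + 1 / (s * ∑ i ∈ range (n - 1), s ^ i)) 1 := by
    fun_prop (disch := simp; omega)
  refine (tendsto_nhdsWithin_of_tendsto_nhds hc.tendsto).congr' ?_ |>.trans_eq ?_
  · filter_upwards [self_mem_nhdsWithin] with s (hs : 1 < s)
    exact (powRatio_eq hn (one_pos.trans hs) hs.ne').symm
  · have hn1 : ((n : ℝ) - 1) ≠ 0 := by
      rw [sub_ne_zero]; exact_mod_cast (show n ≠ 1 by omega)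
    simp only [one_pow, sum_const, card_range, nsmul_eq_mul, Nat.cast_pred (show 0 < n by omega),
      mul_one, one_mul]
    rw [one_add_div hn1, sub_add_cancel]

lemma tendsto_gamRatio {n : ℕ} (hn : 2 ≤ n) :
    Tendsto (gamRatio n) (𝓝[>] 1) (𝓝 (1 / ((n : ℝ) - 1))) := by
  obtain rfl | ⟨m, rfl⟩ : n = 2 ∨ ∃ m, n = m + 3 :=
    (eq_or_ne n 2).imp_right fun h => ⟨n - 3, by omega⟩
  · have hslope : Tendsto (fun u => (log u - log 1) / (u - 1)) (𝓝[≠] 1) (𝓝 1) := by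
      have h := hasDerivAt_iff_tendsto_slope.1 (hasDerivAt_log one_ne_zero)
      rw [inv_one] at h
      exact h.congr (slope_def_field log 1)
    rw [show (1 : ℝ) / ((2 : ℕ) - 1) = 1 by norm_num]
    refine (hslope.comp tendsto_inv_nhdsGT_one_nhdsNE).congr' ?_
    filter_upwards [self_mem_nhdsWithin] with s (hs : 1 < s)
    exact (gamRatio_two (one_pos.trans hs).ne').symm
  · have hc : ContinuousAt
        (fun s : ℝ => s ^ (m + 1) * (1 - 1 / ∑ i ∈ range (m + 2), s ^ i) / (m + 1)) 1 := by
      fun_prop (disch := simp; positivity)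
    refine (tendsto_nhdsWithin_of_tendsto_nhds hc.tendsto).congr' ?_ |>.trans_eq ?_
    · filter_upwards [self_mem_nhdsWithin] with s (hs : 1 < s)
      exact (gamRatio_add_three m (one_pos.trans hs) hs.ne').symm
    · have hm : ((m + 3 : ℕ) : ℝ) - 1 = m + 2 := by push_cast; ring
      rw [hm]
      congr 1
      simp only [one_pow, one_mul, sum_const, card_range, nsmul_eq_mul, mul_one]
      push_cast
      field_simp
      ring

lemma Gam_pos (n : ℕ) {R : ℝ} (hR : 1 < R) : 0 < Gam n R := by
  rw [Gam]
  split_ifs with h2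
  · exact log_pos hR
  rw [one_div_mul_eq_div]
  rcases lt_or_gt_of_ne (show (n : ℝ) ≠ 2 by exact_mod_cast h2) with hlt | hgt
  · exact div_pos_of_neg_of_neg (by linarith [one_lt_rpow hR (show 0 < (2 : ℝ) - n by linarith)])
      (by linarith)
  · exact div_pos (by linarith [rpow_lt_one_of_one_lt_of_neg hR (show (2 : ℝ) - n < 0 by linarith)])
      (by linarith)

lemma del_pos (n : ℕ) {β R : ℝ} (hβ : 0 ≤ β) (hR : 1 < R) : 0 < del n β R := by
  have := Gam_pos n hR
  have := rpow_pos_of_pos (one_pos.trans hR) ((n : ℝ) - 1)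
  rw [del]
  positivity

lemma strictMonoOn_rhoOfRatio {n : ℕ} (hn : 2 ≤ n) {β R : ℝ} (hR : 1 < R)
    (hβ : ((n : ℝ) - 1) / R < β) : StrictMonoOn (rhoOfRatio n β R) (Ioi 1) := by
  have hn1 : (1 : ℝ) ≤ (n : ℝ) - 1 := by
    rw [le_sub_iff_add_le]; exact_mod_cast hn
  have hβ0 : 0 < β := (div_pos (by linarith) (by linarith)).trans hβ
  have hδ := del_pos n hβ0.le hR
  intro s hs t ht hst
  have hG := strictMonoOn_gamRatio hn hs ht hst
  have hQ := strictAntiOn_powRatio hn hs ht hst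
  rw [rhoOfRatio, rhoOfRatio]
  gcongr

lemma tendsto_rhoOfRatio {n : ℕ} (hn : 2 ≤ n) (β : ℝ) {R : ℝ} (hR : R ≠ 0) :
    Tendsto (rhoOfRatio n β R) (𝓝[>] 1) (𝓝 (del n β R)) := by
  have hn1 : ((n : ℝ) - 1) ≠ 0 := by
    rw [sub_ne_zero]; exact_mod_cast (show n ≠ 1 by omega)
  have hn0 : (n : ℝ) ≠ 0 := by exact_mod_cast (show n ≠ 0 by omega)
  have hlim : Tendsto (rhoOfRatio n β R) (𝓝[>] 1) _ :=
    ((tendsto_gamRatio hn).const_mul (β * del n β R * R / 2)).const_add (del n β R / 2) |>.sub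
      ((tendsto_powRatio hn).const_mul (del n β R * R / (2 * n) * (β - ((n : ℝ) - 1) / R)))
  convert hlim using 2
  field_simp
  ring

lemma tendsto_div_nhdsLT_nhdsGT_one {R : ℝ} (hR : 0 < R) :
    Tendsto (R / ·) (𝓝[<] R) (𝓝[>] 1) := by
  refine tendsto_nhdsWithin_iff.2 ⟨?_, ?_⟩
  · have hc : ContinuousAt (R / ·) R := by fun_prop (disch := exact hR.ne')
    simpa [hR.ne'] using hc.tendsto.mono_left nhdsWithin_le_nhds
  · filter_upwards [Ioo_mem_nhdsLT hR] with r hr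
    exact (one_lt_div hr.1).2 hr.2

lemma AntitoneOn.le_of_tendsto_nhdsLT {α β : Type*} [LinearOrder α] [TopologicalSpace α]
    [OrderTopology α] [DenselyOrdered α] [Preorder β] [TopologicalSpace β] [ClosedIicTopology β]
    {f : α → β} {a b : α} {L : β} (hf : AntitoneOn f (Ico a b))
    (hlim : Tendsto f (𝓝[<] b) (𝓝 L)) {x : α} (hx : x ∈ Ico a b) : L ≤ f x := by
  have := nhdsLT_neBot_of_exists_lt ⟨x, hx.2⟩
  refine le_of_tendsto hlim ?_
  filter_upwards [Ioo_mem_nhdsLT hx.2] with y hy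
  exact hf hx ⟨hx.1.trans hy.1.le, hy.2⟩ hy.1.le

theorem stmt_18 (n : ℕ) (hn : 2 ≤ n) (β R : ℝ) (hβ : (n : ℝ) - 1 / 2 ≤ β) (hR : 1 < R) :
    StrictAntiOn (fun r : ℝ => rho n β R r) (Set.Ico 1 R) ∧
      Filter.Tendsto (fun r : ℝ => rho n β R r) (nhdsWithin R (Set.Iio R))
        (nhds (del n β R)) ∧
      ∀ r ∈ Set.Ico (1 : ℝ) R, del n β R ≤ rho n β R r := by
  have hR0 : 0 < R := one_pos.trans hR
  have hβ' : ((n : ℝ) - 1) / R < β := by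
    have : (1 : ℝ) ≤ n - 1 := by rw [le_sub_iff_add_le]; exact_mod_cast hn
    linarith [div_lt_self (by linarith : (0 : ℝ) < n - 1) hR]
  have hrho : EqOn (rho n β R) (rhoOfRatio n β R ∘ (R / ·)) (Ioo 0 R) :=
    fun r hr => rho_eq_rhoOfRatio n β hR0 hr.1
  have hanti : StrictAntiOn (rho n β R) (Ico 1 R) := by
    refine ((strictMonoOn_rhoOfRatio hn hR hβ').comp_strictAntiOn ?_ ?_).congr
      (EqOn.mono (fun r (hr : r ∈ Ico 1 R) => (⟨one_pos.trans_le hr.1, hr.2⟩ : r ∈ Ioo 0 R))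
        hrho.symm)
    · intro r hr t ht hrt
      exact div_lt_div_of_pos_left hR0 (one_pos.trans_le hr.1) hrt
    · intro r hr
      exact (one_lt_div (one_pos.trans_le hr.1)).2 hr.2
  have hlim : Tendsto (rho n β R) (𝓝[<] R) (𝓝 (del n β R)) :=
    ((tendsto_rhoOfRatio hn β hR0.ne').comp (tendsto_div_nhdsLT_nhdsGT_one hR0)).congr'
      (eventuallyEq_of_mem (Ioo_mem_nhdsLT hR0) hrho).symm
  exact ⟨hanti, hlim, fun r hr => hanti.antitoneOn.le_of_tendsto_nhdsLT hlim hr⟩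
end

section
/- Let n ≥ 2 be an integer, β ≥ n − 1/2, R > 1, and let ρ and u be defined by ρ(r) = δ(R)/2 + (β δ(R) r/2)·((R/r)^(2n−2) Γ(R/r))/((R/r)^(n−1) − 1) − (δ(R) r/(2n))·(β − (n−1)/R)·((R/r)^n − 1)/((R/r)^(n−1) − 1) and u(r) = δ(R)·[1 + β r (R/r)^(n−1) Γ(R/r)] for 1 ≤ r < R. Then ρ(r) ≤ u(r) for all r ∈ [1, R). -/
noncomputable def uFun (n : ℕ) (β R r : ℝ) : ℝ :=
  del n β R * (1 + β * r * (R / r) ^ ((n : ℝ) - 1) * Gam n (R / r))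

open Real

lemma Gam_nonneg (n : ℕ) {s : ℝ} (hs : 1 ≤ s) : 0 ≤ Gam n s := by
  unfold Gam
  split_ifs with h2
  · exact log_nonneg hs
  rcases lt_or_gt_of_ne h2 with hlt | hgt
  · have hn : (n : ℝ) < 2 := by exact_mod_cast hlt
    refine mul_nonneg_of_nonpos_of_nonpos (by rw [one_div]; exact inv_nonpos.2 (by linarith)) ?_
    linarith [one_le_rpow hs (by linarith : (0 : ℝ) ≤ 2 - n)]
  · have hn : (2 : ℝ) < n := by exact_mod_cast hgt
    refine mul_nonneg (by rw [one_div]; exact inv_nonneg.2 (by linarith)) ?_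
    linarith [rpow_le_one_of_one_le_of_nonpos hs (by linarith : (2 : ℝ) - n ≤ 0)]

lemma one_add_mul_sub_one_le_rpow {x p : ℝ} (hx : 0 ≤ x) (hp : 1 ≤ p) :
    1 + p * (x - 1) ≤ x ^ p := by
  simpa using one_add_mul_self_le_rpow_one_add (by linarith : -1 ≤ x - 1) hp

lemma natCast_mul_Gam_le {n : ℕ} (hn : 2 ≤ n) {s : ℝ} (hs : 1 ≤ s) :
    n * Gam n s ≤ s ^ (n : ℝ) - 1 := by
  have hs0 : 0 < s := by linarith
  unfold Gam
  split_ifs with h2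
  · subst h2
    simp only [Nat.cast_ofNat, rpow_two]
    nlinarith [log_le_sub_one_of_pos hs0]
  have hn : (2 : ℝ) < n := by exact_mod_cast lt_of_le_of_ne hn (Ne.symm h2)
  -- Bernoulli for `x = s ^ (n - 2)` with exponent `n / (n - 2)`, then `1 - x⁻¹ ≤ x - 1`.
  set x := s ^ ((n : ℝ) - 2) with hx
  have hx1 : 1 ≤ x := one_le_rpow hs (by linarith)
  have hbern := one_add_mul_sub_one_le_rpow (by linarith : 0 ≤ x)
    ((one_le_div (by linarith)).2 (by linarith) : 1 ≤ (n : ℝ) / (n - 2))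
  rw [hx, ← rpow_mul hs0.le, mul_div_cancel₀ _ (by linarith)] at hbern
  rw [show (2 : ℝ) - n = -((n : ℝ) - 2) by ring, rpow_neg hs0.le, ← hx]
  have hinv : 1 - x⁻¹ ≤ x - 1 := by
    have := inv_le_one_of_one_le₀ hx1
    nlinarith [mul_inv_cancel₀ (by linarith : x ≠ 0)]
  rw [div_mul_eq_mul_div, add_div' _ _ _ (by linarith), div_le_iff₀ (by linarith)] at hbern
  rw [one_div_mul_eq_div, mul_div_assoc', div_le_iff₀ (by linarith)]
  nlinarith

lemma del_nonneg (n : ℕ) {β R : ℝ} (hβ : 0 ≤ β) (hR : 1 ≤ R) : 0 ≤ del n β R :=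
  one_div_nonneg.2 <| add_nonneg zero_le_one <|
    mul_nonneg (mul_nonneg hβ (rpow_nonneg (by linarith) _)) (Gam_nonneg n hR)

lemma uFun_sub_rho_eq (n : ℕ) (β : ℝ) {R r s t : ℝ} (hn : n ≠ 0) (hr : 0 < r) (hs : R / r = s)
    (hs0 : 0 < s) (ht : s ^ ((n : ℝ) - 1) = t) (ht1 : t ≠ 1) :
    uFun n β R r - rho n β R r = del n β R / (2 * n * s * (t - 1)) *
      (β * R * (n * t * (t - 2) * Gam n s + s ^ (n : ℝ) - 1) + (s ^ (n : ℝ) - n * s + n - 1)) := by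
  have hsq : s ^ (2 * (n : ℝ) - 2) = t ^ 2 := by
    rw [← ht, ← rpow_natCast, ← rpow_mul hs0.le]; ring_nf
  have hpow : s ^ (n : ℝ) = t * s := by
    rw [← ht, ← rpow_add_one hs0.ne', sub_add_cancel]
  have hR : R = r * s := by rw [← hs, mul_div_cancel₀ _ hr.ne']
  have ht1' : t - 1 ≠ 0 := sub_ne_zero.2 ht1
  unfold uFun rho
  rw [hs, hsq, hpow, ht, hR]
  field_simp
  ring

theorem stmt_19_general (n : ℕ) (hn : 2 ≤ n) (β R : ℝ) (hβ : (n : ℝ) - 1 / 2 ≤ β) :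
    ∀ r ∈ Set.Ico (1 : ℝ) R, rho n β R r ≤ uFun n β R r := by
  rintro r ⟨hr1, hrR⟩
  have hn2 : (2 : ℝ) ≤ n := by exact_mod_cast hn
  have hr : 0 < r := by linarith
  set s := R / r
  set t := s ^ ((n : ℝ) - 1)
  have hs : 1 < s := (one_lt_div hr).2 hrR
  have ht : 1 < t := one_lt_rpow hs (by linarith)
  have hΓ := Gam_nonneg n hs.le
  have hnΓ := natCast_mul_Gam_le hn hs.le
  have hbracket : 0 ≤ n * t * (t - 2) * Gam n s + s ^ (n : ℝ) - 1 := by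
    nlinarith [mul_nonneg (mul_nonneg (by linarith : (0 : ℝ) ≤ n) hΓ) (sq_nonneg (t - 1))]
  have hbernoulli : 0 ≤ s ^ (n : ℝ) - n * s + n - 1 := by
    nlinarith [one_add_mul_sub_one_le_rpow (by linarith : 0 ≤ s) (by linarith : (1 : ℝ) ≤ n)]
  rw [← sub_nonneg, uFun_sub_rho_eq n β (by omega) hr rfl (by linarith) rfl ht.ne']
  refine mul_nonneg (div_nonneg (del_nonneg n (by linarith) (by linarith)) ?_) ?_
  · have : 0 < t - 1 := by linarith
    positivity
  · exact add_nonneg (mul_nonneg (by nlinarith) hbracket) hbernoulli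

theorem stmt_19 (n : ℕ) (hn : 2 ≤ n) (β R : ℝ) (hβ : (n : ℝ) - 1 / 2 ≤ β) (hR : 1 < R) :
    ∀ r ∈ Set.Ico (1 : ℝ) R, rho n β R r ≤ uFun n β R r :=
  stmt_19_general n hn β R hβ
end
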